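/- Let v ∈ ℤ^d be nonzero and let μ be a v-homogeneous probability measure that is stationary for the translation-invariant exclusion process. Define f and f_z on Γ = {⟨x,v⟩ : x ∈ ℤ^d} by f(⟨x,v⟩) = μ{η : η(x)=1} and, for z ∈ ℤ^d, f_z(⟨x,v⟩) = μ{η : η(x)=1 and η(x+z)=1} (these are well defined by v-homogeneity). Then for every s ∈ Γ: Σ_z p(z)·[f(s) − f_z(s)] = Σ_z p(z)·[f(s − ⟨z,v⟩) − f_z(s − ⟨z,v⟩)]. -/

import Mathlib

open MeasureTheory Filter Topology

namespace ExclusionPaper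

abbrev Zd (d : ℕ) := Fin d → ℤ

abbrev Conf (d : ℕ) := Zd d → Bool

noncomputable def ind (b : Bool) : ℝ := if b then 1 else 0

def swap {d : ℕ} (η : Conf d) (x y : Zd d) : Conf d :=
  fun z => if z = x then η y else if z = y then η x else η z

def IsCylinder {d : ℕ} (f : Conf d → ℝ) : Prop :=
  ∃ F : Finset (Zd d), ∀ η η' : Conf d, (∀ x ∈ F, η x = η' x) → f η = f η'

noncomputable def gen {d : ℕ} (p : Zd d → ℝ) (f : Conf d → ℝ) (η : Conf d) : ℝ :=
  ∑' x : Zd d, ∑' y : Zd d,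
    p (y - x) * ind (η x) * (1 - ind (η y)) * (f (swap η x y) - f η)

def IsStationary {d : ℕ} (p : Zd d → ℝ) (μ : Measure (Conf d)) : Prop :=
  ∀ f : Conf d → ℝ, IsCylinder f → ∫ η, gen p f η ∂μ = 0

def IsProductWith {d : ℕ} (α : Zd d → ℝ) (μ : Measure (Conf d)) : Prop :=
  IsProbabilityMeasure μ ∧
  ∀ F : Finset (Zd d), ∀ b : Zd d → Bool,
    μ {η : Conf d | ∀ x ∈ F, η x = b x} =
      ∏ x ∈ F, ENNReal.ofReal (if b x then α x else 1 - α x)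

noncomputable def pifun {d : ℕ} (α : Zd d → ℝ) (x : Zd d) : ℝ := α x / (1 - α x)

def innerZ {d : ℕ} (x y : Zd d) : ℤ := ∑ i, x i * y i

noncomputable def innerR {d : ℕ} (x : Zd d) (v : Fin d → ℝ) : ℝ := ∑ i, (x i : ℝ) * v i
def shift {d : ℕ} (x : Zd d) (η : Conf d) : Conf d := fun y => η (y + x)

def VHomog {d : ℕ} (v : Zd d) (μ : Measure (Conf d)) : Prop :=
  ∀ x : Zd d, innerZ x v = 0 → μ.map (shift x) = μ

def onesOn {d : ℕ} (A : Finset (Zd d)) (x : Zd d) : Set (Conf d) :=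
  {η : Conf d | ∀ a ∈ A, η (x + a) = true}

def VProfile {d : ℕ} (v : Zd d) (μ : Measure (Conf d)) : Prop :=
  VHomog v μ ∧
  ∀ A : Finset (Zd d), A.Nonempty →
    Tendsto (fun x : Zd d => (μ (onesOn A x)).toReal)
      (comap (fun x : Zd d => innerZ x v) atBot) (𝓝 (0 : ℝ)) ∧
    Tendsto (fun x : Zd d => (μ (onesOn A x)).toReal)
      (comap (fun x : Zd d => innerZ x v) atTop) (𝓝 (1 : ℝ))

noncomputable def conv {d : ℕ} (p q : Zd d → ℝ) : Zd d → ℝ :=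
  fun z => ∑' w : Zd d, p w * q (z - w)

noncomputable def convPow {d : ℕ} (p : Zd d → ℝ) : ℕ → Zd d → ℝ
  | 0 => fun z => if z = 0 then 1 else 0
  | n + 1 => conv p (convPow p n)

def Irred {d : ℕ} (p : Zd d → ℝ) : Prop :=
  ∀ z : Zd d, ∃ n : ℕ, 1 ≤ n ∧ 0 < convPow p n z

def FiniteMean {d : ℕ} (p : Zd d → ℝ) : Prop :=
  Summable (fun z : Zd d => ((∑ i, |z i| : ℤ) : ℝ) * p z)

noncomputable def driftInner {d : ℕ} (p : Zd d → ℝ) (v : Zd d) : ℝ :=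
  ∑ i, (∑' z : Zd d, ((z i : ℤ) : ℝ) * p z) * ((v i : ℤ) : ℝ)

def ExtremalStationary {d : ℕ} (p : Zd d → ℝ) (μ : Measure (Conf d)) : Prop :=
  IsProbabilityMeasure μ ∧ IsStationary p μ ∧
  ∀ t : ℝ, t ∈ Set.Ioo (0 : ℝ) 1 →
    ∀ μ₁ μ₂ : Measure (Conf d),
      IsProbabilityMeasure μ₁ → IsProbabilityMeasure μ₂ →
      IsStationary p μ₁ → IsStationary p μ₂ →
      μ = ENNReal.ofReal t • μ₁ + ENNReal.ofReal (1 - t) • μ₂ →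
      μ₁ = μ ∧ μ₂ = μ

def StochLE {d : ℕ} (μ₁ μ₂ : Measure (Conf d)) : Prop :=
  ∀ f : Conf d → ℝ, Continuous f → Monotone f → (∃ C : ℝ, ∀ η, |f η| ≤ C) →
    ∫ η, f η ∂μ₁ ≤ ∫ η, f η ∂μ₂

/-! Stationarity applied to the one-site cylinder function `η ↦ η(x)` says that the expected
flux of particles out of `x`, `∑ p(z) P(η(x) = 1, η(x+z) = 0)`, equals the expected flux into
`x`, `∑ p(z) P(η(x-z) = 1, η(x) = 0)`. Both fluxes are expressed through one- and two-point
densities, i.e. through `F` and `F_z` at `⟨x, v⟩` and `⟨x - z, v⟩`. -/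

lemma innerZ_sub {d : ℕ} (x y v : Zd d) : innerZ (x - y) v = innerZ x v - innerZ y v := by
  simp [innerZ, sub_mul, Finset.sum_sub_distrib]

lemma summable_mul_of_abs_le_one {ι : Type*} {p f : ι → ℝ} (hp : Summable p)
    (hp0 : ∀ i, 0 ≤ p i) (hf : ∀ i, |f i| ≤ 1) : Summable fun i => p i * f i :=
  Summable.of_norm_bounded hp fun i => by
    rw [Real.norm_eq_abs, abs_mul, abs_of_nonneg (hp0 i)]
    exact mul_le_of_le_one_right (hp0 i) (hf i)

lemma abs_ind_mul_one_sub_ind_le (a b : Bool) : |ind a * (1 - ind b)| ≤ 1 := by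
  cases a <;> cases b <;> norm_num [ind]

lemma abs_ind_flux_le (a b c : Bool) :
    |ind a * (1 - ind b) - ind b * (1 - ind c)| ≤ 1 := by
  cases a <;> cases b <;> cases c <;> norm_num [ind]

/-- Only jumps into or out of `x` change the occupation of `x`. -/
lemma ind_mul_ind_swap_sub {d : ℕ} (p : Zd d → ℝ) (η : Conf d) (x a b : Zd d) :
    p (b - a) * ind (η a) * (1 - ind (η b)) * (ind (swap η a b x) - ind (η x)) =
      (if b = x then p (x - a) * (ind (η a) * (1 - ind (η x))) else 0) -
        (if a = x then p (b - x) * (ind (η x) * (1 - ind (η b))) else 0) := by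
  by_cases ha : a = x <;> by_cases hb : b = x
  · subst ha hb; simp [swap]
  · subst ha
    simp only [swap, if_true, if_neg hb]
    cases η a <;> cases η b <;> norm_num [ind]
  · subst hb
    simp only [swap, if_neg (Ne.symm ha), if_true, if_neg ha]
    cases η a <;> cases η b <;> norm_num [ind]
  · simp [swap, Ne.symm ha, Ne.symm hb, ha, hb]

lemma isCylinder_ind_eval {d : ℕ} (x : Zd d) : IsCylinder fun η : Conf d => ind (η x) :=
  ⟨{x}, fun _ _ h => congrArg ind (h x (Finset.mem_singleton_self x))⟩

lemma gen_ind_eval {d : ℕ} {p : Zd d → ℝ} (hp : Summable p) (hp0 : ∀ z, 0 ≤ p z)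
    (x : Zd d) (η : Conf d) :
    gen p (fun η => ind (η x)) η =
      ∑' z, p z * (ind (η (x - z)) * (1 - ind (η x)) -
        ind (η x) * (1 - ind (η (x + z)))) := by
  have hin : Summable fun a => p (x - a) * (ind (η a) * (1 - ind (η x))) :=
    summable_mul_of_abs_le_one ((Equiv.subLeft x).summable_iff.mpr hp) (fun _ => hp0 _)
      fun _ => abs_ind_mul_one_sub_ind_le _ _
  have hout : Summable fun b => p (b - x) * (ind (η x) * (1 - ind (η b))) :=
    summable_mul_of_abs_le_one ((Equiv.subRight x).summable_iff.mpr hp) (fun _ => hp0 _)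
      fun _ => abs_ind_mul_one_sub_ind_le _ _
  have hrow : ∀ a, (∑' b, p (b - a) * ind (η a) * (1 - ind (η b)) *
      (ind (swap η a b x) - ind (η x))) =
        p (x - a) * (ind (η a) * (1 - ind (η x))) -
          if a = x then ∑' b, p (b - x) * (ind (η x) * (1 - ind (η b))) else 0 := by
    intro a
    simp only [ind_mul_ind_swap_sub]
    rw [Summable.tsum_sub (summable_of_ne_finset_zero (s := {x}) (by simp_all))
      (by split_ifs <;> simp [hout]), tsum_ite_eq]
    split_ifs <;> simp
  have hin' : ∑' a, p (x - a) * (ind (η a) * (1 - ind (η x))) =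
      ∑' z, p z * (ind (η (x - z)) * (1 - ind (η x))) := by
    rw [← (Equiv.subLeft x).tsum_eq]
    simp
  have hout' : ∑' b, p (b - x) * (ind (η x) * (1 - ind (η b))) =
      ∑' z, p z * (ind (η x) * (1 - ind (η (x + z)))) := by
    rw [← (Equiv.addLeft x).tsum_eq]
    simp
  unfold gen
  rw [tsum_congr hrow, Summable.tsum_sub hin (summable_of_ne_finset_zero (s := {x})
    (by simp_all)), tsum_ite_eq, hin', hout', ← Summable.tsum_sub
    (summable_mul_of_abs_le_one hp hp0 fun _ => abs_ind_mul_one_sub_ind_le _ _)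
    (summable_mul_of_abs_le_one hp hp0 fun _ => abs_ind_mul_one_sub_ind_le _ _)]
  simp only [mul_sub]

noncomputable def siteDensity {d : ℕ} (μ : Measure (Conf d)) (x : Zd d) : ℝ :=
  (μ {η : Conf d | η x = true}).toReal

noncomputable def pairDensity {d : ℕ} (μ : Measure (Conf d)) (x y : Zd d) : ℝ :=
  (μ {η : Conf d | η x = true ∧ η y = true}).toReal

section Densities

variable {d : ℕ} (μ : Measure (Conf d))

lemma ind_eq_indicator (x : Zd d) (η : Conf d) :
    ind (η x) = Set.indicator {η : Conf d | η x = true} 1 η := by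
  by_cases h : η x = true <;> simp [ind, h]

lemma measurableSet_eval_eq_true (x : Zd d) : MeasurableSet {η : Conf d | η x = true} :=
  measurableSet_eq_fun (measurable_pi_apply x) measurable_const

lemma integrable_ind [IsFiniteMeasure μ] (x : Zd d) :
    Integrable (fun η : Conf d => ind (η x)) μ := by
  simp only [ind_eq_indicator]
  exact (integrable_const 1).indicator (measurableSet_eval_eq_true x)

lemma integral_ind (x : Zd d) : ∫ η, ind (η x) ∂μ = siteDensity μ x := by
  simp [ind_eq_indicator, integral_indicator (measurableSet_eval_eq_true x), siteDensity,
    measureReal_def]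

lemma ind_mul_ind_eq_indicator (x y : Zd d) (η : Conf d) :
    ind (η x) * ind (η y) = Set.indicator {η : Conf d | η x = true ∧ η y = true} 1 η := by
  by_cases hx : η x = true <;> by_cases hy : η y = true <;> simp [ind, hx, hy]

lemma measurableSet_eval_eq_true_and (x y : Zd d) :
    MeasurableSet {η : Conf d | η x = true ∧ η y = true} :=
  (measurableSet_eval_eq_true x).inter (measurableSet_eval_eq_true y)

lemma integrable_ind_mul_ind [IsFiniteMeasure μ] (x y : Zd d) :
    Integrable (fun η : Conf d => ind (η x) * ind (η y)) μ := by
  simp only [ind_mul_ind_eq_indicator]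
  exact (integrable_const 1).indicator (measurableSet_eval_eq_true_and x y)

lemma integral_ind_mul_ind (x y : Zd d) :
    ∫ η, ind (η x) * ind (η y) ∂μ = pairDensity μ x y := by
  simp [ind_mul_ind_eq_indicator, integral_indicator (measurableSet_eval_eq_true_and x y),
    pairDensity, measureReal_def]

lemma integrable_ind_mul_one_sub_ind [IsFiniteMeasure μ] (x y : Zd d) :
    Integrable (fun η : Conf d => ind (η x) * (1 - ind (η y))) μ := by
  simp only [mul_one_sub]
  exact (integrable_ind μ x).sub (integrable_ind_mul_ind μ x y)

lemma integral_ind_mul_one_sub_ind [IsFiniteMeasure μ] (x y : Zd d) :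
    ∫ η, ind (η x) * (1 - ind (η y)) ∂μ = siteDensity μ x - pairDensity μ x y := by
  simp only [mul_one_sub]
  rw [integral_sub (integrable_ind μ x) (integrable_ind_mul_ind μ x y), integral_ind,
    integral_ind_mul_ind]

end Densities

theorem IsStationary.flux_balance {d : ℕ} {p : Zd d → ℝ} {μ : Measure (Conf d)}
    [IsProbabilityMeasure μ] (hstat : IsStationary p μ) (hp : Summable p)
    (hp0 : ∀ z, 0 ≤ p z) (x : Zd d) :
    ∑' z, p z * (siteDensity μ x - pairDensity μ x (x + z)) =
      ∑' z, p z * (siteDensity μ (x - z) - pairDensity μ (x - z) x) := by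
  set h : Zd d → Conf d → ℝ := fun z η =>
    p z * (ind (η (x - z)) * (1 - ind (η x)) - ind (η x) * (1 - ind (η (x + z))))
  have hint : ∀ z, Integrable (h z) μ := fun z =>
    ((integrable_ind_mul_one_sub_ind μ _ _).sub
      (integrable_ind_mul_one_sub_ind μ _ _)).const_mul _
  have hbound : ∀ z η, ‖h z η‖ ≤ p z := fun z η => by
    rw [Real.norm_eq_abs, abs_mul, abs_of_nonneg (hp0 z)]
    exact mul_le_of_le_one_right (hp0 z) (abs_ind_flux_le _ _ _)
  have hnorm : Summable fun z => ∫ η, ‖h z η‖ ∂μ := by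
    refine Summable.of_norm_bounded hp fun z => ?_
    simpa using norm_integral_le_of_norm_le_const (μ := μ) (C := p z)
      (Eventually.of_forall fun η => (norm_norm (h z η)).trans_le (hbound z η))
  have hzero : ∑' z, ∫ η, h z η ∂μ = 0 := by
    rw [integral_tsum_of_summable_integral_norm hint hnorm, ← hstat _ (isCylinder_ind_eval x)]
    exact integral_congr_ae (Eventually.of_forall fun η => (gen_ind_eval hp hp0 x η).symm)
  have hterm : ∀ z, ∫ η, h z η ∂μ =
      p z * (siteDensity μ (x - z) - pairDensity μ (x - z) x) -
        p z * (siteDensity μ x - pairDensity μ x (x + z)) := fun z => by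
    rw [integral_const_mul, integral_sub (integrable_ind_mul_one_sub_ind μ _ _)
      (integrable_ind_mul_one_sub_ind μ _ _), integral_ind_mul_one_sub_ind,
      integral_ind_mul_one_sub_ind, mul_sub]
  have hdensity : ∀ y w, |siteDensity μ y - pairDensity μ y w| ≤ 1 := fun y w => by
    rw [← integral_ind_mul_one_sub_ind]
    simpa using norm_integral_le_of_norm_le_const (μ := μ) (C := 1)
      (Eventually.of_forall fun η => (Real.norm_eq_abs _).trans_le
        (abs_ind_mul_one_sub_ind_le (η y) (η w)))
  rw [tsum_congr hterm, Summable.tsum_sub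
    (summable_mul_of_abs_le_one hp hp0 fun _ => hdensity _ _)
    (summable_mul_of_abs_le_one hp hp0 fun _ => hdensity _ _)] at hzero
  linarith

theorem vhomog_stationary_identity_general {d : ℕ} (p : Zd d → ℝ)
    (hp0 : ∀ z, 0 ≤ p z) (hp1 : ∑' z : Zd d, p z = 1)
    (v : Zd d)
    (μ : Measure (Conf d)) (hprob : IsProbabilityMeasure μ)
    (hstat : IsStationary p μ)
    (F : ℤ → ℝ) (Fz : Zd d → ℤ → ℝ)
    (hF : ∀ x : Zd d, F (innerZ x v) = (μ {η : Conf d | η x = true}).toReal)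
    (hFz : ∀ (z x : Zd d),
      Fz z (innerZ x v) = (μ {η : Conf d | η x = true ∧ η (x + z) = true}).toReal) :
    ∀ s : ℤ, (∃ x : Zd d, innerZ x v = s) →
      ∑' z : Zd d, p z * (F s - Fz z s) =
        ∑' z : Zd d, p z * (F (s - innerZ z v) - Fz z (s - innerZ z v)) := by
  rintro s ⟨x, rfl⟩
  have hp : Summable p := by
    by_contra hns
    simp [tsum_eq_zero_of_not_summable hns] at hp1
  simp only [← innerZ_sub, hF, hFz, sub_add_cancel]
  exact hstat.flux_balance hp hp0 x

theorem vhomog_stationary_identity {d : ℕ} (p : Zd d → ℝ)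
    (hp0 : ∀ z, 0 ≤ p z) (hp1 : ∑' z : Zd d, p z = 1)
    (v : Zd d) (hv : v ≠ 0)
    (μ : Measure (Conf d)) (hprob : IsProbabilityMeasure μ)
    (hstat : IsStationary p μ) (hhom : VHomog v μ)
    (F : ℤ → ℝ) (Fz : Zd d → ℤ → ℝ)
    (hF : ∀ x : Zd d, F (innerZ x v) = (μ {η : Conf d | η x = true}).toReal)
    (hFz : ∀ (z x : Zd d),
      Fz z (innerZ x v) = (μ {η : Conf d | η x = true ∧ η (x + z) = true}).toReal) :
    ∀ s : ℤ, (∃ x : Zd d, innerZ x v = s) →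
      ∑' z : Zd d, p z * (F s - Fz z s) =
        ∑' z : Zd d, p z * (F (s - innerZ z v) - Fz z (s - innerZ z v)) :=
  vhomog_stationary_identity_general p hp0 hp1 v μ hprob hstat F Fz hF hFz

end ExclusionPaper
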